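/- Let g : ℕ → Ordinal be strictly increasing with g(0) > 0, and for k ∈ ℕ define the k-shift g_k by g_k(n) = g(n − k) if n ≥ k and g_k(n) = 1 otherwise. For k ∈ ℕ let P_k be the set {f : ℕ → Ordinal | f(n) < g_k(n) for all n}, preordered by f ≤_D h iff {n ∈ ℕ : f(n) ≤ h(n)} is cofinite. Then for all k₁, k₂ ∈ ℕ, the cofinality of the preorder P_{k₁} equals the cofinality of the preorder P_{k₂}. -/
import Mathlib


open Cardinal

/-- The `k`-shift of `g`: `g_k(n) = g(n - k)` for `n ≥ k` and `g_k(n) = 1` for `n < k`. -/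
def kshift1 (g : ℕ → Ordinal) (k : ℕ) (n : ℕ) : Ordinal :=
  if k ≤ n then g (n - k) else 1

/-- The set `P_k = {f : ℕ → Ordinal | ∀ n, f(n) < g_k(n)}`. -/
def ProdBelow (g : ℕ → Ordinal) (k : ℕ) : Type _ :=
  {f : ℕ → Ordinal // ∀ n : ℕ, f n < kshift1 g k n}

/-- The cofinality of the preorder `P_k` under eventual (mod-cofinite) domination:
the least cardinality of a subset `S` of `P_k` such that every element of `P_k` is
`≤_D` some element of `S`, where `f ≤_D h` iff `{n | f(n) ≤ h(n)}` is cofinite. -/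
noncomputable def prodBelowCof (g : ℕ → Ordinal) (k : ℕ) : Cardinal :=
  sInf { c : Cardinal | ∃ S : Set (ProdBelow g k), #S = c ∧
    ∀ f : ProdBelow g k, ∃ h ∈ S, {n : ℕ | f.1 n ≤ h.1 n} ∈ Filter.cofinite }

/-- Map `P_{k₁} → P_{k₂}` (for `k₁ ≤ k₂`): shift a function up by `k₂ - k₁`. -/
def upMap (g : ℕ → Ordinal) {k₁ k₂ : ℕ} (hk : k₁ ≤ k₂) (f : ProdBelow g k₁) :
    ProdBelow g k₂ :=
  ⟨fun n => if k₂ ≤ n then f.1 (n - (k₂ - k₁)) else 0, by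
    intro n
    by_cases hn : k₂ ≤ n
    · simp only [hn, if_true]
      have h1 : k₁ ≤ n - (k₂ - k₁) := by omega
      have hf := f.2 (n - (k₂ - k₁))
      rw [kshift1, if_pos h1] at hf
      rw [kshift1, if_pos hn]
      have he : n - (k₂ - k₁) - k₁ = n - k₂ := by omega
      rwa [he] at hf
    · simp only [hn, if_false]
      rw [kshift1, if_neg hn]
      exact zero_lt_one⟩

/-- Map `P_{k₂} → P_{k₁}` (for `k₁ ≤ k₂`): shift a function down by `k₂ - k₁`. -/
def downMap (g : ℕ → Ordinal) {k₁ k₂ : ℕ} (hk : k₁ ≤ k₂) (f : ProdBelow g k₂) :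
    ProdBelow g k₁ :=
  ⟨fun n => if k₁ ≤ n then f.1 (n + (k₂ - k₁)) else 0, by
    intro n
    by_cases hn : k₁ ≤ n
    · simp only [hn, if_true]
      have h2 : k₂ ≤ n + (k₂ - k₁) := by omega
      have hf := f.2 (n + (k₂ - k₁))
      rw [kshift1, if_pos h2] at hf
      rw [kshift1, if_pos hn]
      have he : n + (k₂ - k₁) - k₂ = n - k₁ := by omega
      rwa [he] at hf
    · simp only [hn, if_false]
      rw [kshift1, if_neg hn]
      exact zero_lt_one⟩

/-- Abstract transfer lemma for cofinalities. -/
lemma prodBelowCof_le_of_maps (g : ℕ → Ordinal) (a b : ℕ)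
    (Φ : ProdBelow g b → ProdBelow g a) (Ψ : ProdBelow g a → ProdBelow g b)
    (H : ∀ f h, {n : ℕ | (Φ f).1 n ≤ h.1 n} ∈ Filter.cofinite →
      {n : ℕ | f.1 n ≤ (Ψ h).1 n} ∈ Filter.cofinite) :
    prodBelowCof g b ≤ prodBelowCof g a := by
  have hne : {c : Cardinal | ∃ S : Set (ProdBelow g a), #S = c ∧
      ∀ f : ProdBelow g a, ∃ h ∈ S, {n : ℕ | f.1 n ≤ h.1 n} ∈ Filter.cofinite}.Nonempty := by
    refine ⟨#(Set.univ : Set (ProdBelow g a)), Set.univ, rfl, fun f => ⟨f, Set.mem_univ f, ?_⟩⟩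
    simp [Filter.univ_mem]
  obtain ⟨S, hS, hcof⟩ := csInf_mem hne
  calc prodBelowCof g b ≤ #(Ψ '' S) := by
        apply csInf_le'
        refine ⟨Ψ '' S, rfl, fun f => ?_⟩
        obtain ⟨h, hhS, hf⟩ := hcof (Φ f)
        exact ⟨Ψ h, Set.mem_image_of_mem Ψ hhS, H f h hf⟩
    _ ≤ #S := Cardinal.mk_image_le
    _ = prodBelowCof g a := hS

theorem prodBelowCof_le_of_le (g : ℕ → Ordinal) {k₁ k₂ : ℕ} (hk : k₁ ≤ k₂) :
    prodBelowCof g k₁ = prodBelowCof g k₂ := by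
  apply le_antisymm
  · -- cof k₁ ≤ cof k₂ : Φ = upMap, Ψ = downMap
    apply prodBelowCof_le_of_maps g k₂ k₁ (upMap g hk) (downMap g hk)
    intro f h hf
    rw [Nat.cofinite_eq_atTop, Filter.mem_atTop_sets] at hf ⊢
    obtain ⟨N, hN⟩ := hf
    refine ⟨N + k₂, fun m hm => ?_⟩
    have hk₁ : k₁ ≤ m := by omega
    have hk₂ : k₂ ≤ m + (k₂ - k₁) := by omega
    have := hN (m + (k₂ - k₁)) (by omega)
    simp only [Set.mem_setOf_eq, upMap, if_pos hk₂] at this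
    have he : m + (k₂ - k₁) - (k₂ - k₁) = m := by omega
    rw [he] at this
    simpa only [Set.mem_setOf_eq, downMap, if_pos hk₁] using this
  · -- cof k₂ ≤ cof k₁ : Φ = downMap, Ψ = upMap
    apply prodBelowCof_le_of_maps g k₁ k₂ (downMap g hk) (upMap g hk)
    intro f h hf
    rw [Nat.cofinite_eq_atTop, Filter.mem_atTop_sets] at hf ⊢
    obtain ⟨N, hN⟩ := hf
    refine ⟨N + k₂ + (k₂ - k₁), fun m hm => ?_⟩
    have hk₂ : k₂ ≤ m := by omega
    have hk₁ : k₁ ≤ m - (k₂ - k₁) := by omega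
    have := hN (m - (k₂ - k₁)) (by omega)
    simp only [Set.mem_setOf_eq, downMap, if_pos hk₁] at this
    have he : m - (k₂ - k₁) + (k₂ - k₁) = m := by omega
    rw [he] at this
    simpa only [Set.mem_setOf_eq, upMap, if_pos hk₂] using this

/-- If `g` is strictly increasing with `g 0 > 0`, then all the preorders `P_k` have
the same cofinality. -/
theorem prodBelowCof_eq (g : ℕ → Ordinal) (hg : StrictMono g) (h0 : 0 < g 0)
    (k₁ k₂ : ℕ) : prodBelowCof g k₁ = prodBelowCof g k₂ := by
  rcases le_total k₁ k₂ with hk | hk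
  · exact prodBelowCof_le_of_le g hk
  · exact (prodBelowCof_le_of_le g hk).symm
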